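/- Let u, v, φ, ψ, w₁, w₂ : ℝ² → ℝ be twice continuously differentiable functions with u > 0, v > 0, φ > 0 and ψ < 0 everywhere, and let λ ≥ 0 be a constant. Assume that on ℝ²: div(φ²∇w₁) = 2uvφψ(w₂ − w₁) + λφ²w₁ and div(ψ²∇w₂) = 2uvφψ(w₁ − w₂) + λψ²w₂. Then for every compactly supported smooth function η : ℝ² → ℝ, ∫_{ℝ²} (φ²|∇w₁|² + ψ²|∇w₂|²) η² dx ≤ 16 ∫_{ℝ²} (φ²w₁² + ψ²w₂²) |∇η|² dx. -/

import Mathlib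

open MeasureTheory
open InnerProductSpace Filter

noncomputable abbrev E2 := EuclideanSpace ℝ (Fin 2)

/-- The divergence of a vector field `X : ℝ² → ℝ²`. -/
noncomputable def diverg (X : E2 → E2) (x : E2) : ℝ :=
  ∑ i : Fin 2,
    (inner ℝ (fderiv ℝ X x (EuclideanSpace.single i 1)) (EuclideanSpace.single i 1) : ℝ)

noncomputable def ee (i : Fin 2) : E2 := EuclideanSpace.single i 1

lemma inner_grad (f : E2 → ℝ) (x v : E2) : (inner ℝ (gradient f x) v : ℝ) = fderiv ℝ f x v :=
  toDual_symm_apply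

lemma grad_sum_eq_inner (f g : E2 → ℝ) (x : E2) :
    (inner ℝ (gradient f x) (gradient g x) : ℝ)
      = ∑ i : Fin 2, fderiv ℝ f x (ee i) * fderiv ℝ g x (ee i) := by
  rw [← (EuclideanSpace.basisFun (Fin 2) ℝ).sum_inner_mul_inner (gradient f x) (gradient g x)]
  refine Finset.sum_congr rfl fun i _ => ?_
  rw [real_inner_comm (gradient g x) ((EuclideanSpace.basisFun (Fin 2) ℝ) i)]
  have hb : ((EuclideanSpace.basisFun (Fin 2) ℝ) i : E2) = ee i := EuclideanSpace.basisFun_apply (Fin 2) ℝ i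
  rw [hb, inner_grad, inner_grad]

lemma norm_grad_sq (f : E2 → ℝ) (x : E2) :
    ‖gradient f x‖ ^ 2 = ∑ i : Fin 2, (fderiv ℝ f x (ee i)) ^ 2 := by
  rw [← real_inner_self_eq_norm_sq, grad_sum_eq_inner]
  exact Finset.sum_congr rfl fun i _ => (sq _).symm

lemma cauchy_schwarz_sum (f g : E2 → ℝ) (x : E2) :
    (∑ i : Fin 2, fderiv ℝ f x (ee i) * fderiv ℝ g x (ee i)) ^ 2
      ≤ (∑ i : Fin 2, (fderiv ℝ f x (ee i)) ^ 2) * ∑ i : Fin 2, (fderiv ℝ g x (ee i)) ^ 2 := by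
  rw [← grad_sum_eq_inner, ← norm_grad_sq, ← norm_grad_sq, sq]
  have := real_inner_mul_inner_self_le (gradient f x) (gradient g x)
  rw [real_inner_self_eq_norm_sq, real_inner_self_eq_norm_sq] at this
  exact this

lemma contDiff_grad (w : E2 → ℝ) (hw : ContDiff ℝ 2 w) :
    ContDiff ℝ 1 (fun y => gradient w y) := by
  have h1 : ContDiff ℝ 1 (fderiv ℝ w) := hw.fderiv_right (by norm_num)
  exact ((toDual ℝ E2).symm.contDiff).comp h1

lemma contDiff_X (φ w : E2 → ℝ) (hφ : ContDiff ℝ 2 φ) (hw : ContDiff ℝ 2 w) :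
    ContDiff ℝ 1 (fun y => φ y ^ 2 • gradient w y) :=
  ((hφ.of_le (by norm_num)).pow 2).smul (contDiff_grad w hw)

lemma contDiff_Xi (φ w : E2 → ℝ) (hφ : ContDiff ℝ 2 φ) (hw : ContDiff ℝ 2 w) (i : Fin 2) :
    ContDiff ℝ 1 (fun y => φ y ^ 2 * fderiv ℝ w y (ee i)) :=
  ((hφ.of_le (by norm_num)).pow 2).mul
    ((hw.fderiv_right (by norm_num : (1 : WithTop ℕ∞) + 1 ≤ 2)).clm_apply contDiff_const)

lemma cont_fderiv_apply (f : E2 → ℝ) (hf : ContDiff ℝ 1 f) (v : E2) :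
    Continuous fun x => fderiv ℝ f x v :=
  ((hf.fderiv_right (by norm_num : (0 : WithTop ℕ∞) + 1 ≤ 1)).clm_apply contDiff_const).continuous

lemma diverg_eq (φ w : E2 → ℝ) (hφ : ContDiff ℝ 2 φ) (hw : ContDiff ℝ 2 w) (x : E2) :
    diverg (fun y => φ y ^ 2 • gradient w y) x
      = ∑ i : Fin 2, fderiv ℝ (fun y => φ y ^ 2 * fderiv ℝ w y (ee i)) x (ee i) := by
  unfold diverg
  refine Finset.sum_congr rfl fun i _ => ?_
  set X : E2 → E2 := fun y => φ y ^ 2 • gradient w y with hXdef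
  have hX : DifferentiableAt ℝ X x := ((contDiff_X φ w hφ hw).differentiable one_ne_zero) x
  have hL : HasFDerivAt (fun y => (innerSL ℝ (ee i)) (X y))
      ((innerSL ℝ (ee i)).comp (fderiv ℝ X x)) x :=
    ((innerSL ℝ (ee i)).hasFDerivAt).comp x hX.hasFDerivAt
  have hfun : (fun y => (innerSL ℝ (ee i)) (X y))
      = fun y => φ y ^ 2 * fderiv ℝ w y (ee i) := by
    funext y
    rw [innerSL_apply_apply, hXdef]
    simp only
    rw [real_inner_smul_right, real_inner_comm, inner_grad]
  calc (inner ℝ (fderiv ℝ X x (EuclideanSpace.single i 1)) (EuclideanSpace.single i 1) : ℝ)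
      = (innerSL ℝ (ee i)) (fderiv ℝ X x (ee i)) := by
        rw [innerSL_apply_apply, real_inner_comm]; rfl
    _ = ((innerSL ℝ (ee i)).comp (fderiv ℝ X x)) (ee i) := rfl
    _ = fderiv ℝ (fun y => (innerSL ℝ (ee i)) (X y)) x (ee i) := by rw [hL.fderiv]
    _ = fderiv ℝ (fun y => φ y ^ 2 * fderiv ℝ w y (ee i)) x (ee i) := by rw [hfun]

lemma fderiv_g_apply (w η : E2 → ℝ) (hw : Differentiable ℝ w) (hη : Differentiable ℝ η)
    (x v : E2) :
    fderiv ℝ (fun y => w y * η y ^ 2) x v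
      = fderiv ℝ w x v * η x ^ 2 + 2 * w x * η x * fderiv ℝ η x v := by
  have hsq : HasFDerivAt (fun y => η y * η y)
      (η x • fderiv ℝ η x + η x • fderiv ℝ η x) x :=
    (hη x).hasFDerivAt.mul (hη x).hasFDerivAt
  have hmul : HasFDerivAt (fun y => w y * (η y * η y))
      (w x • (η x • fderiv ℝ η x + η x • fderiv ℝ η x) + (η x * η x) • fderiv ℝ w x) x :=
    (hw x).hasFDerivAt.mul hsq
  have heq : (fun y => w y * η y ^ 2) = fun y => w y * (η y * η y) := by
    funext y; ring
  rw [heq, hmul.fderiv]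
  simp only [ContinuousLinearMap.add_apply, ContinuousLinearMap.coe_smul',
    Pi.smul_apply, smul_eq_mul]
  ring

lemma integrable_eta_factor (η : E2 → ℝ) (hηc : HasCompactSupport η) (F : E2 → ℝ)
    (hF : Continuous F) (h0 : ∀ x, x ∉ tsupport η → F x = 0) : Integrable F :=
  hF.integrable_of_hasCompactSupport (HasCompactSupport.intro hηc h0)

lemma eta_zero (η : E2 → ℝ) {x : E2} (hx : x ∉ tsupport η) : η x = 0 :=
  image_eq_zero_of_notMem_tsupport hx

lemma fderiv_eta_zero (η : E2 → ℝ) {x : E2} (hx : x ∉ tsupport η) : fderiv ℝ η x = 0 := by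
  by_contra h
  exact hx (support_fderiv_subset ℝ h)

lemma grad_eta_zero (η : E2 → ℝ) {x : E2} (hx : x ∉ tsupport η) : gradient η x = 0 := by
  unfold gradient
  rw [fderiv_eta_zero η hx, map_zero]

lemma amgm (c wv ηv S s t : ℝ) (hc : 0 ≤ c) (hs : 0 ≤ s) (ht : 0 ≤ t) (hCS : S ^ 2 ≤ s * t) :
    -(2 * c * wv * ηv * S) ≤ (1/2) * (c * s * ηv ^ 2) + 2 * (c * wv ^ 2 * t) := by
  have key : -(2 * wv * ηv * S) ≤ (1/2) * (s * ηv ^ 2) + 2 * (wv ^ 2 * t) := by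
    rcases eq_or_lt_of_le ht with h0 | hpos
    · have hS : S = 0 := by nlinarith [sq_nonneg S]
      rw [hS]
      have : (0:ℝ) ≤ (1/2) * (s * ηv ^ 2) + 2 * (wv ^ 2 * t) := by positivity
      linarith
    · nlinarith [sq_nonneg (S * ηv + 2 * wv * t), mul_nonneg (sq_nonneg ηv) (sub_nonneg.mpr hCS)]
  nlinarith [mul_le_mul_of_nonneg_left key hc]

lemma key_ibp (φ w η : E2 → ℝ) (hφ : ContDiff ℝ 2 φ) (hw : ContDiff ℝ 2 w)
    (hη : ContDiff ℝ (⊤ : ℕ∞) η) (hηc : HasCompactSupport η) :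
    ∫ x : E2, (w x * η x ^ 2) * diverg (fun y => φ y ^ 2 • gradient w y) x
      = - ∫ x : E2, (φ x ^ 2 * (∑ i : Fin 2, (fderiv ℝ w x (ee i)) ^ 2) * η x ^ 2
          + 2 * φ x ^ 2 * w x * η x
            * ∑ i : Fin 2, fderiv ℝ η x (ee i) * fderiv ℝ w x (ee i)) := by
  have hwd : Differentiable ℝ w := hw.differentiable (by norm_num)
  have hηd : Differentiable ℝ η := hη.differentiable (by simp)
  have hη1 : ContDiff ℝ 1 η := hη.of_le (by simp)
  set g : E2 → ℝ := fun y => w y * η y ^ 2 with hgdef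
  have hgc : ContDiff ℝ 1 g := (hw.of_le (by norm_num)).mul (hη1.pow 2)
  set Xi : Fin 2 → E2 → ℝ := fun i y => φ y ^ 2 * fderiv ℝ w y (ee i) with hXidef
  have hXic : ∀ i, ContDiff ℝ 1 (Xi i) := fun i => contDiff_Xi φ w hφ hw i
  -- continuity facts
  have cg : Continuous g := hgc.continuous
  have cXi : ∀ i, Continuous (Xi i) := fun i => (hXic i).continuous
  have cdXi : ∀ i, Continuous fun x => fderiv ℝ (Xi i) x (ee i) :=
    fun i => cont_fderiv_apply (Xi i) (hXic i) (ee i)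
  have cdg : ∀ i, Continuous fun x => fderiv ℝ g x (ee i) :=
    fun i => cont_fderiv_apply g hgc (ee i)
  -- vanishing facts
  have hg0 : ∀ x, x ∉ tsupport η → g x = 0 := by
    intro x hx; simp [hgdef, eta_zero η hx]
  have hdg0 : ∀ i (x : E2), x ∉ tsupport η → fderiv ℝ g x (ee i) = 0 := by
    intro i x hx
    rw [hgdef]
    rw [fderiv_g_apply w η hwd hηd, eta_zero η hx, fderiv_eta_zero η hx]
    simp
  -- integrability facts
  have int1 : ∀ i, Integrable (fun x => g x * fderiv ℝ (Xi i) x (ee i)) :=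
    fun i => integrable_eta_factor η hηc _ (cg.mul (cdXi i))
      (fun x hx => by rw [hg0 x hx, zero_mul])
  have int2 : ∀ i, Integrable (fun x => fderiv ℝ g x (ee i) * Xi i x) :=
    fun i => integrable_eta_factor η hηc _ ((cdg i).mul (cXi i))
      (fun x hx => by rw [hdg0 i x hx, zero_mul])
  have int3 : ∀ i, Integrable (fun x => g x * Xi i x) :=
    fun i => integrable_eta_factor η hηc _ (cg.mul (cXi i))
      (fun x hx => by rw [hg0 x hx, zero_mul])
  -- integration by parts in each direction
  have ibp : ∀ i : Fin 2, ∫ x : E2, g x * fderiv ℝ (Xi i) x (ee i)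
      = - ∫ x : E2, fderiv ℝ g x (ee i) * Xi i x := fun i =>
    integral_mul_fderiv_eq_neg_fderiv_mul_of_integrable (int2 i) (int1 i) (int3 i)
      (fun x _ => hgc.differentiable one_ne_zero x) (fun x _ => (hXic i).differentiable one_ne_zero x)
  calc ∫ x : E2, g x * diverg (fun y => φ y ^ 2 • gradient w y) x
      = ∫ x : E2, ∑ i : Fin 2, g x * fderiv ℝ (Xi i) x (ee i) := by
        refine integral_congr_ae (Filter.Eventually.of_forall fun x => ?_)
        beta_reduce
        rw [diverg_eq φ w hφ hw x, Finset.mul_sum]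
    _ = ∑ i : Fin 2, ∫ x : E2, g x * fderiv ℝ (Xi i) x (ee i) :=
        (integral_finset_sum _ (fun i _ => int1 i))
    _ = ∑ i : Fin 2, -∫ x : E2, fderiv ℝ g x (ee i) * Xi i x :=
        Finset.sum_congr rfl fun i _ => ibp i
    _ = - ∑ i : Fin 2, ∫ x : E2, fderiv ℝ g x (ee i) * Xi i x := by
        rw [← Finset.sum_neg_distrib]
    _ = - ∫ x : E2, ∑ i : Fin 2, fderiv ℝ g x (ee i) * Xi i x := by
        rw [integral_finset_sum _ (fun i _ => int2 i)]
    _ = - ∫ x : E2, (φ x ^ 2 * (∑ i : Fin 2, (fderiv ℝ w x (ee i)) ^ 2) * η x ^ 2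
          + 2 * φ x ^ 2 * w x * η x
            * ∑ i : Fin 2, fderiv ℝ η x (ee i) * fderiv ℝ w x (ee i)) := by
        congr 1
        refine integral_congr_ae (Filter.Eventually.of_forall fun x => ?_)
        beta_reduce
        have hterm : ∀ i : Fin 2, fderiv ℝ g x (ee i) * Xi i x
            = φ x ^ 2 * (fderiv ℝ w x (ee i)) ^ 2 * η x ^ 2
              + 2 * φ x ^ 2 * w x * η x * (fderiv ℝ η x (ee i) * fderiv ℝ w x (ee i)) := by
          intro i
          rw [hgdef]
          rw [fderiv_g_apply w η hwd hηd]
          show (fderiv ℝ w x (ee i) * η x ^ 2 + 2 * w x * η x * fderiv ℝ η x (ee i))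
              * (φ x ^ 2 * fderiv ℝ w x (ee i)) = _
          ring
        simp only [Fin.sum_univ_two]
        rw [hterm 0, hterm 1]
        ring

lemma cont_sumsq (w : E2 → ℝ) (hw : ContDiff ℝ 1 w) :
    Continuous fun x => ∑ i : Fin 2, (fderiv ℝ w x (ee i)) ^ 2 :=
  continuous_finset_sum _ fun i _ => (cont_fderiv_apply w hw (ee i)).pow 2

lemma cont_summul (f g : E2 → ℝ) (hf : ContDiff ℝ 1 f) (hg : ContDiff ℝ 1 g) :
    Continuous fun x => ∑ i : Fin 2, fderiv ℝ f x (ee i) * fderiv ℝ g x (ee i) :=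
  continuous_finset_sum _ fun i _ =>
    (cont_fderiv_apply f hf (ee i)).mul (cont_fderiv_apply g hg (ee i))

lemma combine (P₁ P₂ Q₁ Q₂ R₁ R₂ B : E2 → ℝ)
    (iP₁ : Integrable P₁) (iP₂ : Integrable P₂) (iQ₁ : Integrable Q₁) (iQ₂ : Integrable Q₂)
    (iR₁ : Integrable R₁) (iR₂ : Integrable R₂) (iB : Integrable B)
    (e₁ : ∫ x : E2, R₁ x = - ∫ x : E2, (P₁ x + Q₁ x))
    (e₂ : ∫ x : E2, R₂ x = - ∫ x : E2, (P₂ x + Q₂ x))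
    (hpt : ∀ x, -((R₁ x + Q₁ x) + (R₂ x + Q₂ x)) ≤ (1/2) * (P₁ x + P₂ x) + 2 * B x)
    (hBpos : ∀ x, 0 ≤ B x) :
    ∫ x : E2, (P₁ x + P₂ x) ≤ 16 * ∫ x : E2, B x := by
  have iRQ₁ : Integrable (fun x : E2 => R₁ x + Q₁ x) := iR₁.add iQ₁
  have iRQ₂ : Integrable (fun x : E2 => R₂ x + Q₂ x) := iR₂.add iQ₂
  have iPP : Integrable (fun x : E2 => P₁ x + P₂ x) := iP₁.add iP₂
  have s₁ : ∫ x : E2, (P₁ x + Q₁ x) = (∫ x : E2, P₁ x) + ∫ x : E2, Q₁ x := integral_add iP₁ iQ₁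
  have s₂ : ∫ x : E2, (P₂ x + Q₂ x) = (∫ x : E2, P₂ x) + ∫ x : E2, Q₂ x := integral_add iP₂ iQ₂
  have t₁ : ∫ x : E2, (R₁ x + Q₁ x) = (∫ x : E2, R₁ x) + ∫ x : E2, Q₁ x := integral_add iR₁ iQ₁
  have t₂ : ∫ x : E2, (R₂ x + Q₂ x) = (∫ x : E2, R₂ x) + ∫ x : E2, Q₂ x := integral_add iR₂ iQ₂
  have sP : ∫ x : E2, (P₁ x + P₂ x) = (∫ x : E2, P₁ x) + ∫ x : E2, P₂ x := integral_add iP₁ iP₂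
  have hIB : 0 ≤ ∫ x : E2, B x := integral_nonneg hBpos
  have lhsInt : Integrable (fun x : E2 => -((R₁ x + Q₁ x) + (R₂ x + Q₂ x))) :=
    (iRQ₁.add iRQ₂).neg
  have ir1 : Integrable (fun x : E2 => (1/2 : ℝ) * (P₁ x + P₂ x)) := iPP.const_mul _
  have ir2 : Integrable (fun x : E2 => (2 : ℝ) * B x) := iB.const_mul _
  have rhsInt : Integrable (fun x : E2 => (1/2) * (P₁ x + P₂ x) + 2 * B x) := ir1.add ir2
  have mono := integral_mono lhsInt rhsInt hpt
  have lhsEq : ∫ x : E2, -((R₁ x + Q₁ x) + (R₂ x + Q₂ x))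
      = -((∫ x : E2, (R₁ x + Q₁ x)) + ∫ x : E2, (R₂ x + Q₂ x)) := by
    rw [integral_neg, integral_add iRQ₁ iRQ₂]
  have rhsEq : ∫ x : E2, ((1/2) * (P₁ x + P₂ x) + 2 * B x)
      = (1/2) * (∫ x : E2, (P₁ x + P₂ x)) + 2 * ∫ x : E2, B x := by
    rw [integral_add ir1 ir2, integral_const_mul, integral_const_mul]
  rw [lhsEq, rhsEq] at mono
  rw [s₁] at e₁
  rw [s₂] at e₂
  rw [t₁, t₂, sP] at mono
  rw [sP]
  linarith

/-- The key energy estimate in the proof that stable solutions with linear growth are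
one-dimensional: a Caccioppoli-type inequality for the quotients `w₁, w₂`. -/
theorem caccioppoli_estimate (u v φ ψ w₁ w₂ : E2 → ℝ)
    (hu : ContDiff ℝ 2 u) (hv : ContDiff ℝ 2 v)
    (hφ : ContDiff ℝ 2 φ) (hψ : ContDiff ℝ 2 ψ)
    (hw₁ : ContDiff ℝ 2 w₁) (hw₂ : ContDiff ℝ 2 w₂)
    (hupos : ∀ x, 0 < u x) (hvpos : ∀ x, 0 < v x)
    (hφpos : ∀ x, 0 < φ x) (hψneg : ∀ x, ψ x < 0)
    (lam : ℝ) (hlam : 0 ≤ lam)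
    (h₁ : ∀ x, diverg (fun y => φ y ^ 2 • gradient w₁ y) x
      = 2 * u x * v x * φ x * ψ x * (w₂ x - w₁ x) + lam * φ x ^ 2 * w₁ x)
    (h₂ : ∀ x, diverg (fun y => ψ y ^ 2 • gradient w₂ y) x
      = 2 * u x * v x * φ x * ψ x * (w₁ x - w₂ x) + lam * ψ x ^ 2 * w₂ x) :
    ∀ η : E2 → ℝ, ContDiff ℝ (⊤ : ℕ∞) η → HasCompactSupport η →
      (∫ x : E2, (φ x ^ 2 * ‖gradient w₁ x‖ ^ 2 + ψ x ^ 2 * ‖gradient w₂ x‖ ^ 2) * η x ^ 2)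
        ≤ 16 * ∫ x : E2, (φ x ^ 2 * w₁ x ^ 2 + ψ x ^ 2 * w₂ x ^ 2) * ‖gradient η x‖ ^ 2 := by
  intro η hη hηc
  have hη1 : ContDiff ℝ 1 η := hη.of_le (by simp)
  have hw1' : ContDiff ℝ 1 w₁ := hw₁.of_le (by norm_num)
  have hw2' : ContDiff ℝ 1 w₂ := hw₂.of_le (by norm_num)
  -- continuity of all the pieces
  have cφ := hφ.continuous; have cψ := hψ.continuous
  have cu := hu.continuous; have cv := hv.continuous
  have cw₁ := hw₁.continuous; have cw₂ := hw₂.continuous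
  have cη := hη.continuous
  have cs₁ := cont_sumsq w₁ hw1'
  have cs₂ := cont_sumsq w₂ hw2'
  have csη := cont_sumsq η hη1
  have cm₁ := cont_summul η w₁ hη1 hw1'
  have cm₂ := cont_summul η w₂ hη1 hw2'
  -- integrability
  have iP₁ : Integrable (fun x : E2 =>
      φ x ^ 2 * (∑ i : Fin 2, (fderiv ℝ w₁ x (ee i)) ^ 2) * η x ^ 2) :=
    integrable_eta_factor η hηc _ (((cφ.pow 2).mul cs₁).mul (cη.pow 2))
      (fun x hx => by simp [eta_zero η hx])
  have iP₂ : Integrable (fun x : E2 =>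
      ψ x ^ 2 * (∑ i : Fin 2, (fderiv ℝ w₂ x (ee i)) ^ 2) * η x ^ 2) :=
    integrable_eta_factor η hηc _ (((cψ.pow 2).mul cs₂).mul (cη.pow 2))
      (fun x hx => by simp [eta_zero η hx])
  have iQ₁ : Integrable (fun x : E2 => 2 * φ x ^ 2 * w₁ x * η x
      * ∑ i : Fin 2, fderiv ℝ η x (ee i) * fderiv ℝ w₁ x (ee i)) :=
    integrable_eta_factor η hηc _
      ((((continuous_const.mul (cφ.pow 2)).mul cw₁).mul cη).mul cm₁)
      (fun x hx => by simp [eta_zero η hx])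
  have iQ₂ : Integrable (fun x : E2 => 2 * ψ x ^ 2 * w₂ x * η x
      * ∑ i : Fin 2, fderiv ℝ η x (ee i) * fderiv ℝ w₂ x (ee i)) :=
    integrable_eta_factor η hηc _
      ((((continuous_const.mul (cψ.pow 2)).mul cw₂).mul cη).mul cm₂)
      (fun x hx => by simp [eta_zero η hx])
  have iR₁ : Integrable (fun x : E2 => (w₁ x * η x ^ 2)
      * (2 * u x * v x * φ x * ψ x * (w₂ x - w₁ x) + lam * φ x ^ 2 * w₁ x)) :=
    integrable_eta_factor η hηc _
      ((cw₁.mul (cη.pow 2)).mul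
        ((((((continuous_const.mul cu).mul cv).mul cφ).mul cψ).mul (cw₂.sub cw₁)).add
          ((continuous_const.mul (cφ.pow 2)).mul cw₁)))
      (fun x hx => by simp [eta_zero η hx])
  have iR₂ : Integrable (fun x : E2 => (w₂ x * η x ^ 2)
      * (2 * u x * v x * φ x * ψ x * (w₁ x - w₂ x) + lam * ψ x ^ 2 * w₂ x)) :=
    integrable_eta_factor η hηc _
      ((cw₂.mul (cη.pow 2)).mul
        ((((((continuous_const.mul cu).mul cv).mul cφ).mul cψ).mul (cw₁.sub cw₂)).add
          ((continuous_const.mul (cψ.pow 2)).mul cw₂)))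
      (fun x hx => by simp [eta_zero η hx])
  have iB : Integrable (fun x : E2 => (φ x ^ 2 * w₁ x ^ 2 + ψ x ^ 2 * w₂ x ^ 2)
      * ∑ i : Fin 2, (fderiv ℝ η x (ee i)) ^ 2) :=
    integrable_eta_factor η hηc _
      ((((cφ.pow 2).mul (cw₁.pow 2)).add ((cψ.pow 2).mul (cw₂.pow 2))).mul csη)
      (fun x hx => by simp [fderiv_eta_zero η hx])
  -- the two integration-by-parts identities
  have k1 := key_ibp φ w₁ η hφ hw₁ hη hηc
  have k2 := key_ibp ψ w₂ η hψ hw₂ hη hηc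
  have e₁ : ∫ x : E2, (w₁ x * η x ^ 2)
        * (2 * u x * v x * φ x * ψ x * (w₂ x - w₁ x) + lam * φ x ^ 2 * w₁ x)
      = - ∫ x : E2,
        (φ x ^ 2 * (∑ i : Fin 2, (fderiv ℝ w₁ x (ee i)) ^ 2) * η x ^ 2
          + 2 * φ x ^ 2 * w₁ x * η x
            * ∑ i : Fin 2, fderiv ℝ η x (ee i) * fderiv ℝ w₁ x (ee i)) := by
    rw [← k1]
    exact integral_congr_ae (Eventually.of_forall fun x => by beta_reduce; rw [h₁ x])
  have e₂ : ∫ x : E2, (w₂ x * η x ^ 2)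
        * (2 * u x * v x * φ x * ψ x * (w₁ x - w₂ x) + lam * ψ x ^ 2 * w₂ x)
      = - ∫ x : E2,
        (ψ x ^ 2 * (∑ i : Fin 2, (fderiv ℝ w₂ x (ee i)) ^ 2) * η x ^ 2
          + 2 * ψ x ^ 2 * w₂ x * η x
            * ∑ i : Fin 2, fderiv ℝ η x (ee i) * fderiv ℝ w₂ x (ee i)) := by
    rw [← k2]
    exact integral_congr_ae (Eventually.of_forall fun x => by beta_reduce; rw [h₂ x])
  have main := combine _ _ _ _ _ _ _ iP₁ iP₂ iQ₁ iQ₂ iR₁ iR₂ iB e₁ e₂ ?_ ?_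
  · -- rewrite goal to match `main`
    have goalEq1 : (∫ x : E2,
          (φ x ^ 2 * ‖gradient w₁ x‖ ^ 2 + ψ x ^ 2 * ‖gradient w₂ x‖ ^ 2) * η x ^ 2)
        = ∫ x : E2,
          (φ x ^ 2 * (∑ i : Fin 2, (fderiv ℝ w₁ x (ee i)) ^ 2) * η x ^ 2
            + ψ x ^ 2 * (∑ i : Fin 2, (fderiv ℝ w₂ x (ee i)) ^ 2) * η x ^ 2) :=
      integral_congr_ae (Eventually.of_forall fun x => by
        beta_reduce; rw [norm_grad_sq, norm_grad_sq]; ring)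
    have goalEq2 : (∫ x : E2,
          (φ x ^ 2 * w₁ x ^ 2 + ψ x ^ 2 * w₂ x ^ 2) * ‖gradient η x‖ ^ 2)
        = ∫ x : E2, (φ x ^ 2 * w₁ x ^ 2 + ψ x ^ 2 * w₂ x ^ 2)
            * ∑ i : Fin 2, (fderiv ℝ η x (ee i)) ^ 2 :=
      integral_congr_ae (Eventually.of_forall fun x => by
        beta_reduce; rw [norm_grad_sq])
    rw [goalEq1, goalEq2]
    exact main
  · -- pointwise inequality
    intro x
    have hn : 2 * u x * v x * φ x * ψ x < 0 :=
      mul_neg_of_pos_of_neg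
        (mul_pos (mul_pos (mul_pos two_pos (hupos x)) (hvpos x)) (hφpos x)) (hψneg x)
    have hr : -((w₁ x * η x ^ 2)
          * (2 * u x * v x * φ x * ψ x * (w₂ x - w₁ x) + lam * φ x ^ 2 * w₁ x))
        - (w₂ x * η x ^ 2)
          * (2 * u x * v x * φ x * ψ x * (w₁ x - w₂ x) + lam * ψ x ^ 2 * w₂ x) ≤ 0 := by
      have expand : -((w₁ x * η x ^ 2)
            * (2 * u x * v x * φ x * ψ x * (w₂ x - w₁ x) + lam * φ x ^ 2 * w₁ x))
          - (w₂ x * η x ^ 2)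
            * (2 * u x * v x * φ x * ψ x * (w₁ x - w₂ x) + lam * ψ x ^ 2 * w₂ x)
          = (2 * u x * v x * φ x * ψ x) * ((w₁ x - w₂ x) * η x) ^ 2
            - lam * ((φ x * w₁ x * η x) ^ 2 + (ψ x * w₂ x * η x) ^ 2) := by ring
      rw [expand]
      have h1 : (2 * u x * v x * φ x * ψ x) * ((w₁ x - w₂ x) * η x) ^ 2 ≤ 0 :=
        mul_nonpos_of_nonpos_of_nonneg hn.le (sq_nonneg _)
      have h2 : 0 ≤ lam * ((φ x * w₁ x * η x) ^ 2 + (ψ x * w₂ x * η x) ^ 2) :=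
        mul_nonneg hlam (by positivity)
      linarith
    have hq1 := amgm (φ x ^ 2) (w₁ x) (η x)
      (∑ i : Fin 2, fderiv ℝ η x (ee i) * fderiv ℝ w₁ x (ee i))
      (∑ i : Fin 2, (fderiv ℝ w₁ x (ee i)) ^ 2) (∑ i : Fin 2, (fderiv ℝ η x (ee i)) ^ 2)
      (sq_nonneg _) (Finset.sum_nonneg fun i _ => sq_nonneg _)
      (Finset.sum_nonneg fun i _ => sq_nonneg _)
      (by rw [mul_comm]; exact cauchy_schwarz_sum η w₁ x)
    have hq2 := amgm (ψ x ^ 2) (w₂ x) (η x)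
      (∑ i : Fin 2, fderiv ℝ η x (ee i) * fderiv ℝ w₂ x (ee i))
      (∑ i : Fin 2, (fderiv ℝ w₂ x (ee i)) ^ 2) (∑ i : Fin 2, (fderiv ℝ η x (ee i)) ^ 2)
      (sq_nonneg _) (Finset.sum_nonneg fun i _ => sq_nonneg _)
      (Finset.sum_nonneg fun i _ => sq_nonneg _)
      (by rw [mul_comm]; exact cauchy_schwarz_sum η w₂ x)
    nlinarith [hr, hq1, hq2]
  · -- nonnegativity of B
    intro x
    exact mul_nonneg (by positivity) (Finset.sum_nonneg fun i _ => sq_nonneg _)
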